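/- Let q > 1, a mesh size h > 0, an integer M_x ≥ 1, nonnegative symmetric summable weights (w_j)_{j≠0}, and initial data u⁰ : ℤ → ℝ with u⁰_i = 0 for |i| > M_x. For each time step Δt > 0 let (u^{n,Δt})_{n∈ℕ} be the solution of the fully discrete implicit scheme (FD) with data u⁰, and define the piecewise-constant interpolant v^{Δt}_i : [0,∞) → ℝ by v^{Δt}_i(0) := u⁰_i and v^{Δt}_i(t) := u^{n+1,Δt}_i for t ∈ (nΔt, (n+1)Δt]. Let (v_i)_{i∈ℤ} be the solution of the semi-discrete scheme (SD) with initial data u⁰. Then for every i ∈ ℤ and every T > 0, sup_{t∈[0,T]} |v^{Δt}_i(t) − v_i(t)| → 0 as Δt → 0⁺. -/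

import Mathlib

/-!
Write `φ = opow · (q - 1)` and let `L` be `(-Δ)_h` on sequences supported in `|i| ≤ Mx`; it is
symmetric with `0 ≤ L ≤ 2 ∑ w`. Subtracting the two schemes shows that the error
`φ(uⁿ) - φ(v(nΔt))` equals `-L Aⁿ`, where `Aⁿ` accumulates the step defects
`ρᵐ = ∫_{mΔt}^{(m+1)Δt} (u^{m+1} - v(s)) ds`. With the `ℓ^∞` bounds on both solutions (the discrete
maximum principle for `u`, continuity for `v`), monotonicity of `φ` gives `⟨L Aⁿ, ρⁿ⟩ ≤ O(Δt²)`,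
so the energy `⟨L Aⁿ, Aⁿ⟩` grows by `O(Δt²)` per step and is `O(Δt)` up to time `T`. Since
`|L A|² ≤ 2 ∑ w ⟨L A, A⟩`, the error in `φ` is `O(√Δt)`; uniform continuity of `φ⁻¹` on bounded
sets and of `v` in time then give the uniform convergence of the interpolant.
-/

open scoped BigOperators ENNReal

noncomputable def opow (x r : ℝ) : ℝ := |x| ^ (r - 1) * x

noncomputable def discLap (w u : ℤ → ℝ) (i : ℤ) : ℝ :=
  ∑' j : ℤ, if j = 0 then 0 else w j * (u i - u (i - j))

noncomputable def lqNorm (h q : ℝ) (u : ℤ → ℝ) : ℝ :=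
  (∑' i : ℤ, h * |u i| ^ q) ^ (1 / q)

noncomputable def energyNorm (h : ℝ) (w u : ℤ → ℝ) : ℝ :=
  Real.sqrt ((1 / 2) * ∑' i : ℤ, ∑' j : ℤ, if j = 0 then 0 else h * w j * (u i - u (i - j)) ^ 2)

/-- The fully discrete implicit scheme (FD). -/
def IsFD (q Δt : ℝ) (w : ℤ → ℝ) (Mx : ℤ) (u0 : ℤ → ℝ) (u : ℕ → ℤ → ℝ) : Prop :=
  u 0 = u0 ∧
  (∀ n : ℕ, ∀ i : ℤ, Mx < |i| → u n i = 0) ∧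
  (∀ n : ℕ, ∀ i : ℤ, |i| ≤ Mx →
    (opow (u (n + 1) i) (q - 1) - opow (u n i) (q - 1)) / Δt + discLap w (u (n + 1)) i = 0)

/-- A solution of the semi-discrete scheme (SD) with initial data `u0`. -/
def IsSD (q : ℝ) (w : ℤ → ℝ) (Mx : ℤ) (u0 : ℤ → ℝ) (v : ℤ → ℝ → ℝ) : Prop :=
  (∀ i : ℤ, ContinuousOn (v i) (Set.Ici 0)) ∧
  (∀ i : ℤ, Mx < |i| → ∀ t : ℝ, 0 ≤ t → v i t = 0) ∧
  (∀ i : ℤ, v i 0 = u0 i) ∧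
  (∀ i : ℤ, |i| ≤ Mx → ∀ t : ℝ, 0 ≤ t →
    opow (v i t) (q - 1) = opow (u0 i) (q - 1) - ∫ s in (0:ℝ)..t, discLap w (fun k => v k s) i)

/-- `C` satisfies the discrete Poincaré–Sobolev inequality for exponent `q`. -/
def PSConst (h q C : ℝ) (w : ℤ → ℝ) (Mx : ℤ) : Prop :=
  ∀ f : ℤ → ℝ, (∀ i : ℤ, Mx < |i| → f i = 0) → lqNorm h q f ≤ C * energyNorm h w f

/-- Piecewise-constant-in-time interpolant of the fully discrete solution:
`interp Δt u0 u i 0 = u0 i` and `interp Δt u0 u i t = u (n+1) i` for `t ∈ (nΔt, (n+1)Δt]`. -/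
noncomputable def interp (Δt : ℝ) (u0 : ℤ → ℝ) (u : ℕ → ℤ → ℝ) (i : ℤ) (t : ℝ) : ℝ :=
  if t ≤ 0 then u0 i else u (Int.toNat ⌈t / Δt⌉) i

open Finset

section Operator

variable {w : ℤ → ℝ} {Mx : ℤ}

noncomputable def nodes (Mx : ℤ) : Finset ℤ := Icc (-Mx) Mx

lemma mem_nodes {k : ℤ} : k ∈ nodes Mx ↔ |k| ≤ Mx := by
  rw [nodes, mem_Icc, abs_le, and_comm]

noncomputable def offWeight (w : ℤ → ℝ) (j : ℤ) : ℝ := if j = 0 then 0 else w j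

noncomputable def totalWeight (w : ℤ → ℝ) : ℝ := ∑' j, offWeight w j

lemma offWeight_nonneg (hw0 : ∀ j, 0 ≤ w j) (j : ℤ) : 0 ≤ offWeight w j := by
  unfold offWeight; split_ifs <;> simp [hw0]

lemma offWeight_sub_comm (hwsym : ∀ j, w (-j) = w j) (i k : ℤ) :
    offWeight w (i - k) = offWeight w (k - i) := by
  unfold offWeight
  rw [← hwsym, neg_sub]
  simp only [sub_eq_zero, eq_comm]

lemma summable_offWeight (hw0 : ∀ j, 0 ≤ w j) (hwsum : Summable w) :
    Summable (offWeight w) :=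
  hwsum.of_nonneg_of_le (offWeight_nonneg hw0) fun j => by
    unfold offWeight; split_ifs <;> simp [hw0]

lemma totalWeight_nonneg (hw0 : ∀ j, 0 ≤ w j) : 0 ≤ totalWeight w :=
  tsum_nonneg (offWeight_nonneg hw0)

lemma sum_offWeight_le_totalWeight (hw0 : ∀ j, 0 ≤ w j) (hwsum : Summable w) (i : ℤ) :
    ∑ k ∈ nodes Mx, offWeight w (i - k) ≤ totalWeight w := by
  rw [← sum_image (f := offWeight w) fun a _ b _ (hab : i - a = i - b) => by omega]
  exact (summable_offWeight hw0 hwsum).sum_le_tsum _ fun j _ => offWeight_nonneg hw0 j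

/-- `(-Δ)_h`, valid only on sequences supported in `nodes Mx` (see `discLap_eq_lapOp`). -/
noncomputable def lapOp (w : ℤ → ℝ) (Mx : ℤ) : (ℤ → ℝ) →ₗ[ℝ] ℤ → ℝ where
  toFun x i := totalWeight w * x i - ∑ k ∈ nodes Mx, offWeight w (i - k) * x k
  map_add' x y := by
    ext i
    simp only [Pi.add_apply, mul_add, sum_add_distrib]
    ring
  map_smul' c x := by
    ext i
    simp only [Pi.smul_apply, smul_eq_mul, RingHom.id_apply, mul_sub, mul_sum, mul_left_comm]

lemma lapOp_apply (x : ℤ → ℝ) (i : ℤ) :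
    lapOp w Mx x i = totalWeight w * x i - ∑ k ∈ nodes Mx, offWeight w (i - k) * x k :=
  rfl

lemma discLap_eq_lapOp (hw0 : ∀ j, 0 ≤ w j) (hwsum : Summable w) {x : ℤ → ℝ}
    (hx : ∀ k ∉ nodes Mx, x k = 0) (i : ℤ) : discLap w x i = lapOp w Mx x i := by
  have hfin : ∀ j ∉ (nodes Mx).image (i - ·), offWeight w j * x (i - j) = 0 := fun j hj => by
    rw [hx (i - j) fun h => hj (mem_image.2 ⟨i - j, h, by omega⟩), mul_zero]
  have hshift : ∑' j, offWeight w j * x (i - j) = ∑ k ∈ nodes Mx, offWeight w (i - k) * x k := by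
    rw [tsum_eq_sum hfin, sum_image fun a _ b _ (hab : i - a = i - b) => by omega]
    simp only [sub_sub_cancel]
  have hterm : ∀ j, (if j = 0 then 0 else w j * (x i - x (i - j)))
      = offWeight w j * x i - offWeight w j * x (i - j) := fun j => by
    unfold offWeight; split_ifs <;> ring
  rw [discLap, funext hterm, Summable.tsum_sub ((summable_offWeight hw0 hwsum).mul_right _)
    (summable_of_ne_finset_zero hfin), tsum_mul_right, hshift, lapOp_apply, totalWeight]

lemma abs_lapOp_le (hw0 : ∀ j, 0 ≤ w j) (hwsum : Summable w) {x : ℤ → ℝ} {R : ℝ}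
    (hx : ∀ k, |x k| ≤ R) (i : ℤ) : |lapOp w Mx x i| ≤ 2 * totalWeight w * R := by
  have hS := totalWeight_nonneg hw0
  have hR : 0 ≤ R := (abs_nonneg _).trans (hx 0)
  have hdiag : |totalWeight w * x i| ≤ totalWeight w * R := by
    rw [abs_mul, abs_of_nonneg hS]
    exact mul_le_mul_of_nonneg_left (hx i) hS
  have hoff : |∑ k ∈ nodes Mx, offWeight w (i - k) * x k| ≤ totalWeight w * R :=
    calc |∑ k ∈ nodes Mx, offWeight w (i - k) * x k|
        ≤ ∑ k ∈ nodes Mx, offWeight w (i - k) * R := by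
          refine (abs_sum_le_sum_abs _ _).trans (sum_le_sum fun k _ => ?_)
          rw [abs_mul, abs_of_nonneg (offWeight_nonneg hw0 _)]
          exact mul_le_mul_of_nonneg_left (hx k) (offWeight_nonneg hw0 _)
      _ ≤ totalWeight w * R := by
          rw [← sum_mul]
          exact mul_le_mul_of_nonneg_right (sum_offWeight_le_totalWeight hw0 hwsum i) hR
  rw [lapOp_apply]
  linarith [abs_sub (totalWeight w * x i) (∑ k ∈ nodes Mx, offWeight w (i - k) * x k)]

noncomputable def energy (w : ℤ → ℝ) (Mx : ℤ) : LinearMap.BilinForm ℝ (ℤ → ℝ) :=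
  LinearMap.mk₂ ℝ (fun x y => ∑ i ∈ nodes Mx, lapOp w Mx x i * y i)
    (fun x x' y => by simp only [map_add, Pi.add_apply, add_mul, sum_add_distrib])
    (fun c x y => by simp only [map_smul, Pi.smul_apply, smul_eq_mul, mul_sum, mul_assoc])
    (fun x y y' => by simp only [Pi.add_apply, mul_add, sum_add_distrib])
    (fun c x y => by simp only [Pi.smul_apply, smul_eq_mul, mul_sum, mul_left_comm])

lemma energy_apply (x y : ℤ → ℝ) :
    energy w Mx x y = ∑ i ∈ nodes Mx, lapOp w Mx x i * y i :=
  rfl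

lemma energy_eq (x y : ℤ → ℝ) :
    energy w Mx x y = totalWeight w * ∑ i ∈ nodes Mx, x i * y i
      - ∑ i ∈ nodes Mx, ∑ k ∈ nodes Mx, offWeight w (i - k) * x k * y i := by
  simp only [energy_apply, lapOp_apply, sub_mul, sum_sub_distrib, mul_sum, sum_mul, mul_assoc]

lemma energy_isSymm (hwsym : ∀ j, w (-j) = w j) : (energy w Mx).IsSymm := by
  refine LinearMap.BilinForm.isSymm_def.2 fun x y => ?_
  rw [energy_eq, energy_eq, sum_comm (s := nodes Mx)]
  simp only [mul_comm (x _) (y _), offWeight_sub_comm hwsym, mul_right_comm _ (x _)]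

lemma abs_sum_sum_offWeight_mul_le (hw0 : ∀ j, 0 ≤ w j) (hwsym : ∀ j, w (-j) = w j)
    (hwsum : Summable w) (x : ℤ → ℝ) :
    |∑ i ∈ nodes Mx, ∑ k ∈ nodes Mx, offWeight w (i - k) * x k * x i|
      ≤ totalWeight w * ∑ i ∈ nodes Mx, x i ^ 2 := by
  have hswap : ∑ i ∈ nodes Mx, ∑ k ∈ nodes Mx, offWeight w (i - k) * x k ^ 2
      = ∑ i ∈ nodes Mx, ∑ k ∈ nodes Mx, offWeight w (i - k) * x i ^ 2 := by
    rw [sum_comm]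
    simp only [offWeight_sub_comm hwsym]
  have hrow : ∑ i ∈ nodes Mx, ∑ k ∈ nodes Mx, offWeight w (i - k) * x i ^ 2
      ≤ totalWeight w * ∑ i ∈ nodes Mx, x i ^ 2 := by
    simp only [← sum_mul, mul_sum]
    exact sum_le_sum fun i _ =>
      mul_le_mul_of_nonneg_right (sum_offWeight_le_totalWeight hw0 hwsum i) (sq_nonneg _)
  have hamgm : ∀ i k, 2 * |offWeight w (i - k) * x k * x i|
      ≤ offWeight w (i - k) * x k ^ 2 + offWeight w (i - k) * x i ^ 2 := fun i k => by
    rw [mul_assoc, abs_mul, abs_of_nonneg (offWeight_nonneg hw0 _), abs_mul]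
    nlinarith [offWeight_nonneg hw0 (i - k), sq_nonneg (|x k| - |x i|), sq_abs (x k), sq_abs (x i)]
  have habs : 2 * |∑ i ∈ nodes Mx, ∑ k ∈ nodes Mx, offWeight w (i - k) * x k * x i|
      ≤ 2 * ∑ i ∈ nodes Mx, ∑ k ∈ nodes Mx, offWeight w (i - k) * x i ^ 2 :=
    calc _ ≤ 2 * ∑ i ∈ nodes Mx, ∑ k ∈ nodes Mx, |offWeight w (i - k) * x k * x i| :=
          mul_le_mul_of_nonneg_left ((abs_sum_le_sum_abs _ _).trans
            (sum_le_sum fun i _ => abs_sum_le_sum_abs _ _)) zero_le_two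
      _ ≤ ∑ i ∈ nodes Mx, ∑ k ∈ nodes Mx,
            (offWeight w (i - k) * x k ^ 2 + offWeight w (i - k) * x i ^ 2) := by
          simp only [mul_sum]
          exact sum_le_sum fun i _ => sum_le_sum fun k _ => hamgm i k
      _ = _ := by simp only [sum_add_distrib, hswap, two_mul]
  linarith

lemma energy_isPosSemidef (hw0 : ∀ j, 0 ≤ w j) (hwsym : ∀ j, w (-j) = w j)
    (hwsum : Summable w) : (energy w Mx).IsPosSemidef := by
  refine ⟨energy_isSymm hwsym, ⟨fun x => ?_⟩⟩
  rw [energy_eq]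
  simp only [← sq]
  linarith [(abs_le.1 (abs_sum_sum_offWeight_mul_le hw0 hwsym hwsum (Mx := Mx) x)).2]

lemma energy_self_le (hw0 : ∀ j, 0 ≤ w j) (hwsym : ∀ j, w (-j) = w j)
    (hwsum : Summable w) (x : ℤ → ℝ) :
    energy w Mx x x ≤ 2 * totalWeight w * ∑ i ∈ nodes Mx, x i ^ 2 := by
  rw [energy_eq]
  simp only [← sq]
  linarith [(abs_le.1 (abs_sum_sum_offWeight_mul_le hw0 hwsym hwsum (Mx := Mx) x)).1]

lemma sum_sq_lapOp_le (hw0 : ∀ j, 0 ≤ w j) (hwsym : ∀ j, w (-j) = w j)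
    (hwsum : Summable w) (x : ℤ → ℝ) :
    ∑ i ∈ nodes Mx, lapOp w Mx x i ^ 2 ≤ 2 * totalWeight w * energy w Mx x x := by
  have hpsd := energy_isPosSemidef (Mx := Mx) hw0 hwsym hwsum
  have hX : energy w Mx x (lapOp w Mx x) = ∑ i ∈ nodes Mx, lapOp w Mx x i ^ 2 := by
    simp only [energy_apply, sq]
  have hcs := LinearMap.BilinForm.apply_sq_le_of_symm _ hpsd.isNonneg.nonneg
    (LinearMap.BilinForm.isSymm_iff.1 hpsd.isSymm) x (lapOp w Mx x)
  rw [hX] at hcs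
  have hy := mul_le_mul_of_nonneg_left (energy_self_le hw0 hwsym hwsum (Mx := Mx) (lapOp w Mx x))
    (hpsd.isNonneg.nonneg x)
  rcases (sum_nonneg fun i _ => sq_nonneg _ : 0 ≤ ∑ i ∈ nodes Mx, lapOp w Mx x i ^ 2).eq_or_lt
    with hX0 | hX0
  · rw [← hX0]
    exact mul_nonneg (mul_nonneg zero_le_two (totalWeight_nonneg hw0)) (hpsd.isNonneg.nonneg x)
  · nlinarith

end Operator

section SignedPower

variable {r : ℝ}

lemma opow_zero_left (r : ℝ) : opow 0 r = 0 := by simp [opow]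

lemma opow_neg_left (x r : ℝ) : opow (-x) r = -opow x r := by simp [opow]

lemma opow_of_nonneg {x : ℝ} (hx : 0 ≤ x) (hr : 0 < r) : opow x r = x ^ r := by
  rcases hx.eq_or_lt with rfl | hx
  · rw [opow_zero_left, Real.zero_rpow hr.ne']
  · rw [opow, abs_of_pos hx, ← Real.rpow_add_one hx.ne', sub_add_cancel]

lemma abs_opow (x : ℝ) (hr : 0 < r) : |opow x r| = |x| ^ r := by
  rcases le_total 0 x with hx | hx
  · rw [opow_of_nonneg hx hr, abs_of_nonneg hx, abs_of_nonneg (Real.rpow_nonneg hx r)]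
  · rw [← abs_neg, ← opow_neg_left, opow_of_nonneg (neg_nonneg.2 hx) hr,
      abs_of_nonpos hx, abs_of_nonneg (Real.rpow_nonneg (neg_nonneg.2 hx) r)]

lemma opow_strictMono (hr : 0 < r) : StrictMono (opow · r) :=
  strictMono_of_odd_strictMonoOn_nonneg (fun x => opow_neg_left x r) fun a ha b hb hab => by
    simp only [opow_of_nonneg ha hr, opow_of_nonneg hb hr]
    exact Real.rpow_lt_rpow ha hab hr

lemma opow_sub_opow_mul_sub_nonneg (hr : 0 < r) (a b : ℝ) :
    0 ≤ (opow a r - opow b r) * (a - b) := by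
  rcases le_total a b with hab | hab
  · exact mul_nonneg_of_nonpos_of_nonpos (sub_nonpos.2 ((opow_strictMono hr).monotone hab))
      (sub_nonpos.2 hab)
  · exact mul_nonneg (sub_nonneg.2 ((opow_strictMono hr).monotone hab)) (sub_nonneg.2 hab)

lemma neg_mul_le_opow_sub_add_mul (hr : 0 < r) (a b e : ℝ) {δ D : ℝ} (he : |e| ≤ δ)
    (hab : |a - b| ≤ D) : -(δ * D) ≤ (opow a r - opow b r + e) * (a - b) := by
  have hmono := opow_sub_opow_mul_sub_nonneg hr a b
  have hprod : |e * (a - b)| ≤ δ * D := by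
    rw [abs_mul]
    exact mul_le_mul he hab (abs_nonneg _) ((abs_nonneg e).trans he)
  linarith [neg_abs_le (e * (a - b))]

lemma opow_opow_inv (hr : 0 < r) (x : ℝ) : opow (opow x r) r⁻¹ = x := by
  have hpos (y : ℝ) (hy : 0 ≤ y) : opow (opow y r) r⁻¹ = y := by
    rw [opow_of_nonneg hy hr, opow_of_nonneg (Real.rpow_nonneg hy r) (inv_pos.2 hr),
      Real.rpow_rpow_inv hy hr.ne']
  rcases le_total 0 x with hx | hx
  · exact hpos x hx
  · rw [← neg_neg x, opow_neg_left, opow_neg_left, hpos (-x) (neg_nonneg.2 hx)]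

lemma opow_eq_sub (x : ℝ) (hr : 0 < r) : opow x r = max x 0 ^ r - max (-x) 0 ^ r := by
  rcases le_total 0 x with hx | hx
  · rw [opow_of_nonneg hx hr, max_eq_left hx, max_eq_right (neg_nonpos.2 hx),
      Real.zero_rpow hr.ne', sub_zero]
  · rw [← neg_neg x, opow_neg_left, opow_of_nonneg (neg_nonneg.2 hx) hr, neg_neg,
      max_eq_right hx, max_eq_left (neg_nonneg.2 hx), Real.zero_rpow hr.ne', zero_sub]

lemma continuous_opow (hr : 0 < r) : Continuous (opow · r) := by
  simp only [opow_eq_sub _ hr]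
  have := Real.continuous_rpow_const hr.le
  fun_prop

lemma exists_abs_sub_le_of_abs_opow_sub_le (hr : 0 < r) (R : ℝ) {ε : ℝ} (hε : 0 < ε) :
    ∃ η > 0, ∀ a b : ℝ, |a| ≤ R → |b| ≤ R → |opow a r - opow b r| ≤ η → |a - b| ≤ ε := by
  obtain ⟨δ, hδ, hinv⟩ := Metric.uniformContinuousOn_iff.1
    ((isCompact_Icc (a := -R ^ r) (b := R ^ r)).uniformContinuousOn_of_continuous
      (continuous_opow (inv_pos.2 hr)).continuousOn) ε hε
  have hmem (c : ℝ) (hc : |c| ≤ R) : opow c r ∈ Set.Icc (-R ^ r) (R ^ r) := by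
    refine abs_le.1 ?_
    rw [abs_opow c hr]
    exact Real.rpow_le_rpow (abs_nonneg c) hc hr.le
  refine ⟨δ / 2, half_pos hδ, fun a b ha hb hab => ?_⟩
  have := hinv _ (hmem a ha) _ (hmem b hb) (by rw [Real.dist_eq]; linarith)
  rw [Real.dist_eq, opow_opow_inv hr, opow_opow_inv hr] at this
  exact this.le

end SignedPower

section Schemes

variable {q Δt : ℝ} {w : ℤ → ℝ} {Mx : ℤ} {u0 : ℤ → ℝ} {u : ℕ → ℤ → ℝ} {v : ℤ → ℝ → ℝ}

lemma IsFD.eq_zero (hFD : IsFD q Δt w Mx u0 u) (n : ℕ) {k : ℤ} (hk : k ∉ nodes Mx) :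
    u n k = 0 :=
  hFD.2.1 n k (not_le.1 (mt mem_nodes.2 hk))

lemma IsFD.opow_succ_eq (hΔt : 0 < Δt) (hFD : IsFD q Δt w Mx u0 u) (n : ℕ) {k : ℤ}
    (hk : |k| ≤ Mx) :
    opow (u (n + 1) k) (q - 1) = opow (u n k) (q - 1) - Δt * discLap w (u (n + 1)) k := by
  have h := hFD.2.2 n k hk
  field_simp at h
  linarith

lemma IsFD.opow_succ_eq_lapOp (hw0 : ∀ j, 0 ≤ w j) (hwsum : Summable w) (hΔt : 0 < Δt)
    (hFD : IsFD q Δt w Mx u0 u) (n : ℕ) {k : ℤ} (hk : |k| ≤ Mx) :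
    opow (u (n + 1) k) (q - 1) = opow (u n k) (q - 1) - Δt * lapOp w Mx (u (n + 1)) k := by
  rw [hFD.opow_succ_eq hΔt n hk, discLap_eq_lapOp hw0 hwsum fun j hj => hFD.eq_zero _ hj]

lemma discLap_nonneg_of_forall_le (hw0 : ∀ j, 0 ≤ w j) {x : ℤ → ℝ} {i : ℤ}
    (h : ∀ k, x k ≤ x i) : 0 ≤ discLap w x i :=
  tsum_nonneg fun j => by
    split_ifs
    · exact le_rfl
    · exact mul_nonneg (hw0 j) (sub_nonneg.2 (h _))

lemma discLap_neg (x : ℤ → ℝ) (i : ℤ) : discLap w (-x) i = -discLap w x i := by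
  simp only [discLap, Pi.neg_apply, ← tsum_neg]
  congr 1 with j
  split_ifs <;> ring

lemma IsFD.neg (hFD : IsFD q Δt w Mx u0 u) : IsFD q Δt w Mx (-u0) (-u) := by
  refine ⟨by rw [Pi.neg_apply, hFD.1], fun n i hi => by simp [hFD.2.1 n i hi], fun n i hi => ?_⟩
  simp only [Pi.neg_apply, opow_neg_left, discLap_neg]
  linear_combination -hFD.2.2 n i hi

/-- At a maximum of `u (n+1)` exceeding `R ≥ 0` the discrete Laplacian is nonnegative, so the
scheme gives `φ(max) ≤ φ(u n) ≤ φ(R)`, a contradiction. -/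
lemma IsFD.le_of_forall_le (hq : 1 < q) (hΔt : 0 < Δt) (hw0 : ∀ j, 0 ≤ w j)
    (hFD : IsFD q Δt w Mx u0 u) {R : ℝ} (hR : 0 ≤ R) (h0 : ∀ k, u0 k ≤ R) (n : ℕ) (k : ℤ) :
    u n k ≤ R := by
  induction n generalizing k with
  | zero => exact hFD.1 ▸ h0 k
  | succ n ih =>
    by_contra! hk
    have hkn : k ∈ nodes Mx := by_contra fun h => by linarith [hFD.eq_zero (n + 1) h]
    obtain ⟨i, hi, hmax⟩ := (nodes Mx).exists_max_image (u (n + 1)) ⟨k, hkn⟩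
    have hRi : R < u (n + 1) i := hk.trans_le (hmax k hkn)
    have hlap : 0 ≤ discLap w (u (n + 1)) i := discLap_nonneg_of_forall_le hw0 fun j => by
      by_cases hj : j ∈ nodes Mx
      · exact hmax j hj
      · linarith [hFD.eq_zero (n + 1) hj]
    have hstep := hFD.opow_succ_eq hΔt n (mem_nodes.1 hi)
    have hmono := (opow_strictMono (sub_pos.2 hq)).monotone (ih i)
    have := (opow_strictMono (sub_pos.2 hq)).lt_iff_lt.2 hRi
    nlinarith

lemma IsFD.abs_le_of_forall_abs_le (hq : 1 < q) (hΔt : 0 < Δt) (hw0 : ∀ j, 0 ≤ w j)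
    (hFD : IsFD q Δt w Mx u0 u) {R : ℝ} (hR : 0 ≤ R) (h0 : ∀ k, |k| ≤ Mx → |u0 k| ≤ R)
    (n : ℕ) (k : ℤ) : |u n k| ≤ R := by
  have h0' (k : ℤ) : |u0 k| ≤ R := by
    by_cases hk : k ∈ nodes Mx
    · exact h0 k (mem_nodes.1 hk)
    · rw [← hFD.1, hFD.eq_zero 0 hk, abs_zero]
      exact hR
  refine abs_le.2 ⟨?_, hFD.le_of_forall_le hq hΔt hw0 hR (fun k => (abs_le.1 (h0' k)).2) n k⟩
  have := hFD.neg.le_of_forall_le hq hΔt hw0 hR (fun k => neg_le.1 (abs_le.1 (h0' k)).1) n k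
  simp only [Pi.neg_apply] at this
  linarith

lemma intervalIntegrable_of_continuousOn_Ici {f : ℝ → ℝ} (hf : ContinuousOn f (Set.Ici 0))
    {a b : ℝ} (ha : 0 ≤ a) (hb : 0 ≤ b) : IntervalIntegrable f MeasureTheory.volume a b :=
  (hf.mono fun _ hs => (le_min ha hb).trans hs.1).intervalIntegrable

lemma IsSD.eq_zero (hv : IsSD q w Mx u0 v) {k : ℤ} (hk : k ∉ nodes Mx) {t : ℝ} (ht : 0 ≤ t) :
    v k t = 0 :=
  hv.2.1 k (not_le.1 (mt mem_nodes.2 hk)) t ht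

lemma IsSD.continuousOn_lapOp (hv : IsSD q w Mx u0 v) (k : ℤ) :
    ContinuousOn (fun s => lapOp w Mx (fun j => v j s) k) (Set.Ici 0) := by
  simp only [lapOp_apply]
  exact (continuousOn_const.mul (hv.1 k)).sub
    (continuousOn_finsetSum _ fun j _ => continuousOn_const.mul (hv.1 j))

lemma IsSD.opow_eq_sub_integral (hw0 : ∀ j, 0 ≤ w j) (hwsum : Summable w)
    (hv : IsSD q w Mx u0 v) {k : ℤ} (hk : |k| ≤ Mx) {t₁ t₂ : ℝ} (ht₁ : 0 ≤ t₁) (ht₂ : 0 ≤ t₂) :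
    opow (v k t₂) (q - 1)
      = opow (v k t₁) (q - 1) - ∫ s in t₁..t₂, lapOp w Mx (fun j => v j s) k := by
  have hint (t : ℝ) (ht : 0 ≤ t) : opow (v k t) (q - 1)
      = opow (u0 k) (q - 1) - ∫ s in (0 : ℝ)..t, lapOp w Mx (fun j => v j s) k := by
    rw [hv.2.2.2 k hk t ht]
    congr 1
    refine intervalIntegral.integral_congr fun s hs => ?_
    have hs : 0 ≤ s := (le_min le_rfl ht).trans hs.1
    exact discLap_eq_lapOp hw0 hwsum (fun j hj => hv.eq_zero hj hs) k
  have hII (t : ℝ) (ht : 0 ≤ t) := intervalIntegrable_of_continuousOn_Ici (hv.continuousOn_lapOp k)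
    le_rfl ht
  rw [hint t₂ ht₂, hint t₁ ht₁, ← intervalIntegral.integral_interval_sub_left (hII t₂ ht₂)
    (hII t₁ ht₁)]
  ring

end Schemes

section ErrorEstimate

open MeasureTheory

variable {q Δt : ℝ} {w : ℤ → ℝ} {Mx : ℤ} {u0 : ℤ → ℝ} {u : ℕ → ℤ → ℝ} {v : ℤ → ℝ → ℝ}

noncomputable def stepDefect (Δt : ℝ) (u : ℕ → ℤ → ℝ) (v : ℤ → ℝ → ℝ) (n : ℕ) (i : ℤ) : ℝ :=
  ∫ s in n * Δt..(n + 1) * Δt, (u (n + 1) i - v i s)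

noncomputable def accDefect (Δt : ℝ) (u : ℕ → ℤ → ℝ) (v : ℤ → ℝ → ℝ) (n : ℕ) : ℤ → ℝ :=
  ∑ m ∈ range n, stepDefect Δt u v m

lemma accDefect_succ (n : ℕ) :
    accDefect Δt u v (n + 1) = accDefect Δt u v n + stepDefect Δt u v n :=
  sum_range_succ _ _

lemma lapOp_intervalIntegral {g : ℤ → ℝ → ℝ} {a b : ℝ}
    (hg : ∀ k, IntervalIntegrable (g k) volume a b) (i : ℤ) :
    lapOp w Mx (fun k => ∫ s in a..b, g k s) i = ∫ s in a..b, lapOp w Mx (fun k => g k s) i := by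
  have hsum := IntervalIntegrable.sum (nodes Mx) fun k _ => (hg k).const_mul (offWeight w (i - k))
  rw [sum_fn] at hsum
  simp only [lapOp_apply]
  rw [intervalIntegral.integral_sub ((hg i).const_mul _) hsum, intervalIntegral.integral_const_mul,
    intervalIntegral.integral_finsetSum fun k _ => (hg k).const_mul _]
  simp only [intervalIntegral.integral_const_mul]

lemma lapOp_stepDefect (hΔt : 0 < Δt) (hv : IsSD q w Mx u0 v) (n : ℕ) (k : ℤ) :
    lapOp w Mx (stepDefect Δt u v n) k = Δt * lapOp w Mx (u (n + 1)) k
      - ∫ s in n * Δt..(n + 1) * Δt, lapOp w Mx (fun j => v j s) k := by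
  have ha : (0 : ℝ) ≤ n * Δt := by positivity
  have hb : (0 : ℝ) ≤ (n + 1) * Δt := by positivity
  have hvi (j : ℤ) := intervalIntegrable_of_continuousOn_Ici (hv.1 j) ha hb
  unfold stepDefect
  rw [lapOp_intervalIntegral fun j => intervalIntegrable_const.sub (hvi j)]
  have hsub (s : ℝ) : lapOp w Mx (fun j => u (n + 1) j - v j s) k
      = lapOp w Mx (u (n + 1)) k - lapOp w Mx (fun j => v j s) k :=
    congrFun (map_sub (lapOp w Mx) (u (n + 1)) fun j => v j s) k
  simp only [hsub]
  rw [intervalIntegral.integral_sub intervalIntegrable_const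
    (intervalIntegrable_of_continuousOn_Ici (hv.continuousOn_lapOp k) ha hb)]
  simp only [intervalIntegral.integral_const, smul_eq_mul]
  ring

/-- Step `n` of (FD) minus (SD) integrated over `[nΔt, (n+1)Δt]` is `-(-Δ)_h` of the step
defect. -/
lemma opow_sub_eq_neg_lapOp_accDefect (hw0 : ∀ j, 0 ≤ w j) (hwsum : Summable w)
    (hΔt : 0 < Δt) (hFD : IsFD q Δt w Mx u0 u) (hv : IsSD q w Mx u0 v) (n : ℕ) {k : ℤ}
    (hk : |k| ≤ Mx) :
    opow (u n k) (q - 1) - opow (v k (n * Δt)) (q - 1) = -lapOp w Mx (accDefect Δt u v n) k := by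
  induction n with
  | zero => simp [accDefect, hFD.1, hv.2.2.1]
  | succ n ih =>
    rw [hFD.opow_succ_eq_lapOp hw0 hwsum hΔt n hk, Nat.cast_succ,
      hv.opow_eq_sub_integral hw0 hwsum hk (t₁ := n * Δt) (by positivity) (by positivity),
      accDefect_succ, map_add, Pi.add_apply, lapOp_stepDefect hΔt hv]
    linarith

lemma abs_stepDefect_le (hΔt : 0 < Δt) {R T : ℝ} (hRu : ∀ n k, |u n k| ≤ R)
    (hRv : ∀ k t, 0 ≤ t → t ≤ T → |v k t| ≤ R) {n : ℕ} (hn : (n + 1) * Δt ≤ T) (i : ℤ) :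
    |stepDefect Δt u v n i| ≤ 2 * R * Δt := by
  have hle : (n : ℝ) * Δt ≤ (n + 1) * Δt := by linarith
  have h := intervalIntegral.norm_integral_le_of_norm_le_const (C := 2 * R)
    (f := fun s => u (n + 1) i - v i s) (a := n * Δt) (b := (n + 1) * Δt) fun s hs => by
      rw [Set.uIoc_of_le hle] at hs
      have hs0 : 0 ≤ s := by linarith [hs.1, (by positivity : (0 : ℝ) ≤ n * Δt)]
      rw [Real.norm_eq_abs]
      linarith [abs_sub (u (n + 1) i) (v i s), hRu (n + 1) i, hRv i s hs0 (hs.2.trans hn)]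
  rwa [Real.norm_eq_abs, abs_of_nonneg (sub_nonneg.2 hle), show ((n : ℝ) + 1) * Δt - n * Δt = Δt
    by ring] at h

lemma IsFD.abs_opow_succ_sub_le (hw0 : ∀ j, 0 ≤ w j) (hwsum : Summable w) (hΔt : 0 < Δt)
    (hFD : IsFD q Δt w Mx u0 u) {R : ℝ} (hRu : ∀ n k, |u n k| ≤ R) (n : ℕ) {k : ℤ}
    (hk : |k| ≤ Mx) :
    |opow (u (n + 1) k) (q - 1) - opow (u n k) (q - 1)| ≤ 2 * totalWeight w * R * Δt := by
  rw [hFD.opow_succ_eq_lapOp hw0 hwsum hΔt n hk, sub_sub_cancel_left, abs_neg, abs_mul,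
    abs_of_pos hΔt, mul_comm Δt]
  exact mul_le_mul_of_nonneg_right (abs_lapOp_le hw0 hwsum (hRu (n + 1)) k) hΔt.le

lemma IsSD.abs_opow_sub_le (hw0 : ∀ j, 0 ≤ w j) (hwsum : Summable w) (hv : IsSD q w Mx u0 v)
    {R T : ℝ} (hRv : ∀ k t, 0 ≤ t → t ≤ T → |v k t| ≤ R) {k : ℤ} (hk : |k| ≤ Mx) {t₁ t₂ : ℝ}
    (ht₁ : 0 ≤ t₁) (ht₁₂ : t₁ ≤ t₂) (ht₂ : t₂ ≤ T) :
    |opow (v k t₂) (q - 1) - opow (v k t₁) (q - 1)| ≤ 2 * totalWeight w * R * (t₂ - t₁) := by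
  have h := intervalIntegral.norm_integral_le_of_norm_le_const
    (C := 2 * totalWeight w * R) (f := fun τ => lapOp w Mx (fun j => v j τ) k)
    (a := t₁) (b := t₂) fun τ hτ => by
      rw [Set.uIoc_of_le ht₁₂] at hτ
      exact abs_lapOp_le hw0 hwsum (fun j => hRv j τ (ht₁.trans hτ.1.le) (hτ.2.trans ht₂)) k
  rwa [hv.opow_eq_sub_integral hw0 hwsum hk ht₁ (ht₁.trans ht₁₂), sub_sub_cancel_left, abs_neg,
    ← Real.norm_eq_abs, ← abs_of_nonneg (sub_nonneg.2 ht₁₂)]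

/-- On the `n`-th step the error differs from `φ(u (n+1)) - φ(v s)` by `O(Δt)`, and the latter
times `u (n+1) - v s` is nonnegative by monotonicity of `φ = opow · (q - 1)`. -/
lemma neg_le_opow_sub_mul_sub (hq : 1 < q) (hw0 : ∀ j, 0 ≤ w j) (hwsum : Summable w)
    (hΔt : 0 < Δt) (hFD : IsFD q Δt w Mx u0 u) (hv : IsSD q w Mx u0 v) {R T : ℝ}
    (hRu : ∀ n k, |u n k| ≤ R) (hRv : ∀ k t, 0 ≤ t → t ≤ T → |v k t| ≤ R) {n : ℕ}
    (hn : (n + 1) * Δt ≤ T) {k : ℤ} (hk : |k| ≤ Mx) {s : ℝ}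
    (hs : s ∈ Set.Icc ((n : ℝ) * Δt) ((n + 1) * Δt)) :
    -(8 * totalWeight w * R ^ 2 * Δt)
      ≤ (opow (u n k) (q - 1) - opow (v k (n * Δt)) (q - 1)) * (u (n + 1) k - v k s) := by
  have hR : 0 ≤ 2 * totalWeight w * R :=
    mul_nonneg (mul_nonneg zero_le_two (totalWeight_nonneg hw0)) ((abs_nonneg _).trans (hRu 0 0))
  have ha : (0 : ℝ) ≤ n * Δt := by positivity
  have hs0 : 0 ≤ s := ha.trans hs.1
  have hsT : s ≤ T := hs.2.trans hn
  have hfd := hFD.abs_opow_succ_sub_le hw0 hwsum hΔt hRu n hk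
  have hsd := hv.abs_opow_sub_le hw0 hwsum hRv hk ha hs.1 hsT
  have hsd' : 2 * totalWeight w * R * (s - n * Δt) ≤ 2 * totalWeight w * R * Δt :=
    mul_le_mul_of_nonneg_left (by linarith [hs.2]) hR
  have h := neg_mul_le_opow_sub_add_mul (sub_pos.2 hq) (u (n + 1) k) (v k s)
    (e := (opow (u n k) (q - 1) - opow (u (n + 1) k) (q - 1))
      + (opow (v k s) (q - 1) - opow (v k (n * Δt)) (q - 1)))
    ((abs_add_le _ _).trans (add_le_add (abs_sub_comm (α := ℝ) _ _ ▸ hfd) (hsd.trans hsd')))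
    ((abs_sub _ _).trans (add_le_add (hRu (n + 1) k) (hRv k s hs0 hsT)))
  convert h using 2 <;> ring

lemma neg_le_opow_sub_mul_stepDefect (hq : 1 < q) (hw0 : ∀ j, 0 ≤ w j) (hwsum : Summable w)
    (hΔt : 0 < Δt) (hFD : IsFD q Δt w Mx u0 u) (hv : IsSD q w Mx u0 v) {R T : ℝ}
    (hRu : ∀ n k, |u n k| ≤ R) (hRv : ∀ k t, 0 ≤ t → t ≤ T → |v k t| ≤ R) {n : ℕ}
    (hn : (n + 1) * Δt ≤ T) {k : ℤ} (hk : |k| ≤ Mx) :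
    -(8 * totalWeight w * R ^ 2 * Δt ^ 2)
      ≤ (opow (u n k) (q - 1) - opow (v k (n * Δt)) (q - 1)) * stepDefect Δt u v n k := by
  have ha : (0 : ℝ) ≤ n * Δt := by positivity
  have hle : (n : ℝ) * Δt ≤ (n + 1) * Δt := by linarith
  have hint := intervalIntegral.integral_mono_on hle intervalIntegrable_const
    ((intervalIntegrable_const.sub
      (intervalIntegrable_of_continuousOn_Ici (hv.1 k) ha (ha.trans hle))).const_mul _)
    fun s hs => neg_le_opow_sub_mul_sub hq hw0 hwsum hΔt hFD hv hRu hRv hn hk hs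
  rw [intervalIntegral.integral_const, smul_eq_mul, intervalIntegral.integral_const_mul] at hint
  rw [stepDefect]
  linarith

lemma energy_accDefect_succ_le (hq : 1 < q) (hw0 : ∀ j, 0 ≤ w j)
    (hwsym : ∀ j, w (-j) = w j) (hwsum : Summable w) (hΔt : 0 < Δt)
    (hFD : IsFD q Δt w Mx u0 u) (hv : IsSD q w Mx u0 v) {R T : ℝ}
    (hRu : ∀ n k, |u n k| ≤ R) (hRv : ∀ k t, 0 ≤ t → t ≤ T → |v k t| ≤ R) {n : ℕ}
    (hn : (n + 1) * Δt ≤ T) :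
    energy w Mx (accDefect Δt u v (n + 1)) (accDefect Δt u v (n + 1))
      ≤ energy w Mx (accDefect Δt u v n) (accDefect Δt u v n)
        + 24 * totalWeight w * R ^ 2 * #(nodes Mx) * Δt ^ 2 := by
  set A := accDefect Δt u v n
  set ρ := stepDefect Δt u v n
  have hcross : energy w Mx A ρ ≤ #(nodes Mx) * (8 * totalWeight w * R ^ 2 * Δt ^ 2) := by
    rw [energy_apply, ← nsmul_eq_mul]
    refine sum_le_card_nsmul _ _ _ fun k hk => ?_
    have herr := opow_sub_eq_neg_lapOp_accDefect hw0 hwsum hΔt hFD hv n (mem_nodes.1 hk)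
    have := neg_le_opow_sub_mul_stepDefect hq hw0 hwsum hΔt hFD hv hRu hRv hn (mem_nodes.1 hk)
    rw [herr] at this
    linarith
  have hself : energy w Mx ρ ρ ≤ 2 * totalWeight w * (#(nodes Mx) * (2 * R * Δt) ^ 2) := by
    refine (energy_self_le hw0 hwsym hwsum ρ).trans (mul_le_mul_of_nonneg_left ?_
      (mul_nonneg zero_le_two (totalWeight_nonneg hw0)))
    rw [← nsmul_eq_mul]
    refine sum_le_card_nsmul _ _ _ fun k _ => ?_
    exact sq_le_sq' (abs_le.1 (abs_stepDefect_le hΔt hRu hRv hn k)).1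
      (abs_le.1 (abs_stepDefect_le hΔt hRu hRv hn k)).2
  have hexpand : energy w Mx (A + ρ) (A + ρ)
      = energy w Mx A A + 2 * energy w Mx A ρ + energy w Mx ρ ρ := by
    rw [map_add, map_add, LinearMap.add_apply, LinearMap.add_apply,
      (energy_isSymm hwsym).eq ρ A]
    ring
  rw [accDefect_succ, hexpand]
  linarith

lemma energy_accDefect_le (hq : 1 < q) (hw0 : ∀ j, 0 ≤ w j)
    (hwsym : ∀ j, w (-j) = w j) (hwsum : Summable w) (hΔt : 0 < Δt)
    (hFD : IsFD q Δt w Mx u0 u) (hv : IsSD q w Mx u0 v) {R T : ℝ}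
    (hRu : ∀ n k, |u n k| ≤ R) (hRv : ∀ k t, 0 ≤ t → t ≤ T → |v k t| ≤ R) {n : ℕ}
    (hn : n * Δt ≤ T) :
    energy w Mx (accDefect Δt u v n) (accDefect Δt u v n)
      ≤ 24 * totalWeight w * R ^ 2 * #(nodes Mx) * n * Δt ^ 2 := by
  induction n with
  | zero => simp [accDefect]
  | succ n ih =>
    push_cast at hn ⊢
    have := energy_accDefect_succ_le hq hw0 hwsym hwsum hΔt hFD hv hRu hRv hn
    nlinarith [ih (by nlinarith)]

lemma sq_opow_sub_le (hq : 1 < q) (hw0 : ∀ j, 0 ≤ w j)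
    (hwsym : ∀ j, w (-j) = w j) (hwsum : Summable w) (hΔt : 0 < Δt)
    (hFD : IsFD q Δt w Mx u0 u) (hv : IsSD q w Mx u0 v) {R T : ℝ}
    (hRu : ∀ n k, |u n k| ≤ R) (hRv : ∀ k t, 0 ≤ t → t ≤ T → |v k t| ≤ R) {n : ℕ}
    (hn : n * Δt ≤ T) {k : ℤ} (hk : |k| ≤ Mx) :
    (opow (u n k) (q - 1) - opow (v k (n * Δt)) (q - 1)) ^ 2
      ≤ 48 * totalWeight w ^ 2 * R ^ 2 * #(nodes Mx) * T * Δt := by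
  rw [opow_sub_eq_neg_lapOp_accDefect hw0 hwsum hΔt hFD hv n hk, neg_sq]
  have hS := totalWeight_nonneg hw0
  calc lapOp w Mx (accDefect Δt u v n) k ^ 2
      ≤ ∑ i ∈ nodes Mx, lapOp w Mx (accDefect Δt u v n) i ^ 2 :=
        single_le_sum (f := fun i => lapOp w Mx (accDefect Δt u v n) i ^ 2)
          (fun i _ => sq_nonneg _) (mem_nodes.2 hk)
    _ ≤ 2 * totalWeight w * energy w Mx (accDefect Δt u v n) (accDefect Δt u v n) :=
        sum_sq_lapOp_le hw0 hwsym hwsum _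
    _ ≤ 2 * totalWeight w * (24 * totalWeight w * R ^ 2 * #(nodes Mx) * (n * Δt) * Δt) := by
        refine mul_le_mul_of_nonneg_left ?_ (by positivity)
        linarith [energy_accDefect_le hq hw0 hwsym hwsum hΔt hFD hv hRu hRv hn]
    _ ≤ 48 * totalWeight w ^ 2 * R ^ 2 * #(nodes Mx) * T * Δt := by
        have : 0 ≤ totalWeight w ^ 2 * R ^ 2 * #(nodes Mx) * Δt := by positivity
        nlinarith

end ErrorEstimate

section Convergence

variable {q : ℝ} {w : ℤ → ℝ} {Mx : ℤ} {u0 : ℤ → ℝ} {v : ℤ → ℝ → ℝ}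

lemma IsSD.exists_abs_le (hv : IsSD q w Mx u0 v) (T : ℝ) :
    ∃ R, 0 ≤ R ∧ ∀ k t, 0 ≤ t → t ≤ T → |v k t| ≤ R := by
  have hbound (k : ℤ) : ∃ C, ∀ t ∈ Set.Icc (0 : ℝ) T, ‖v k t‖ ≤ C :=
    isCompact_Icc.exists_bound_of_continuousOn ((hv.1 k).mono Set.Icc_subset_Ici_self)
  choose C hC using hbound
  have hR : 0 ≤ ∑ k ∈ nodes Mx, |C k| := sum_nonneg fun _ _ => abs_nonneg _
  refine ⟨_, hR, fun k t ht0 htT => ?_⟩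
  by_cases hk : k ∈ nodes Mx
  · exact (hC k t ⟨ht0, htT⟩).trans ((le_abs_self _).trans
      (single_le_sum (f := fun k => |C k|) (fun _ _ => abs_nonneg _) hk))
  · rwa [hv.eq_zero hk ht0, abs_zero]

lemma exists_abs_sub_le_of_isFD_of_isSD (hq : 1 < q) (hw0 : ∀ j, 0 ≤ w j)
    (hwsym : ∀ j, w (-j) = w j) (hwsum : Summable w) {U : ℝ → ℕ → ℤ → ℝ}
    (hU : ∀ Δt, 0 < Δt → IsFD q Δt w Mx u0 (U Δt)) (hv : IsSD q w Mx u0 v) (i : ℤ) (T : ℝ)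
    {ε : ℝ} (hε : 0 < ε) :
    ∃ δ > 0, ∀ Δt, 0 < Δt → Δt < δ → ∀ n : ℕ, n * Δt ≤ T → |U Δt n i - v i (n * Δt)| ≤ ε := by
  obtain ⟨Rv, hRv0, hRv⟩ := hv.exists_abs_le T
  set R := max (∑ k ∈ nodes Mx, |u0 k|) Rv
  have hRu (Δt : ℝ) (hΔt : 0 < Δt) : ∀ n k, |U Δt n k| ≤ R :=
    (hU Δt hΔt).abs_le_of_forall_abs_le hq hΔt hw0 (le_max_of_le_right hRv0) fun k hk =>
      le_max_of_le_left (single_le_sum (f := fun k => |u0 k|) (fun _ _ => abs_nonneg _)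
        (mem_nodes.2 hk))
  have hRv' (k : ℤ) (t : ℝ) (ht0 : 0 ≤ t) (htT : t ≤ T) : |v k t| ≤ R :=
    (hRv k t ht0 htT).trans (le_max_right _ _)
  set K := 48 * totalWeight w ^ 2 * R ^ 2 * #(nodes Mx) * T
  obtain ⟨η, hη, hinv⟩ := exists_abs_sub_le_of_abs_opow_sub_le (sub_pos.2 hq) R hε
  refine ⟨η ^ 2 / (|K| + 1), by positivity, fun Δt hΔt hδ n hn => ?_⟩
  have hn0 : (0 : ℝ) ≤ n * Δt := by positivity
  by_cases hi : |i| ≤ Mx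
  · have hsq := sq_opow_sub_le hq hw0 hwsym hwsum hΔt (hU Δt hΔt) hv (hRu Δt hΔt) hRv' hn hi
    have hKΔt : K * Δt ≤ η ^ 2 := by
      rw [lt_div_iff₀ (by positivity)] at hδ
      nlinarith [le_abs_self K]
    exact hinv _ _ (hRu Δt hΔt n i) (hRv' i _ hn0 hn)
      (abs_le_of_sq_le_sq (hsq.trans hKΔt) hη.le)
  · rw [(hU Δt hΔt).eq_zero n (mt mem_nodes.1 hi), hv.eq_zero (mt mem_nodes.1 hi) hn0, sub_zero,
      abs_zero]
    exact hε.le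

lemma exists_interp_eq {Δt t : ℝ} (hΔt : 0 < Δt) (ht : 0 ≤ t) {u : ℕ → ℤ → ℝ} (hu : u 0 = u0)
    (i : ℤ) : ∃ n : ℕ, interp Δt u0 u i t = u n i ∧ t ≤ n * Δt ∧ n * Δt < t + Δt := by
  rcases ht.eq_or_lt with rfl | ht
  · exact ⟨0, by simp [interp, hu], by simp, by simpa⟩
  have hceil : ((⌈t / Δt⌉.toNat : ℕ) : ℝ) = ⌈t / Δt⌉ := by
    exact_mod_cast Int.toNat_of_nonneg (Int.ceil_nonneg (div_pos ht hΔt).le)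
  refine ⟨⌈t / Δt⌉.toNat, if_neg ht.not_ge, ?_, ?_⟩
  · rw [hceil, ← div_le_iff₀ hΔt]
    exact Int.le_ceil _
  · have := mul_lt_mul_of_pos_right (Int.ceil_lt_add_one (t / Δt)) hΔt
    rw [hceil]
    rwa [add_mul, div_mul_cancel₀ t hΔt.ne', one_mul] at this

end Convergence

theorem stmt19_general (q : ℝ) (hq : 1 < q)
    (Mx : ℤ)
    (w : ℤ → ℝ) (hw0 : ∀ j : ℤ, 0 ≤ w j) (hwsym : ∀ j : ℤ, w (-j) = w j) (hwsum : Summable w)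
    (u0 : ℤ → ℝ)
    (U : ℝ → ℕ → ℤ → ℝ) (hU : ∀ Δt : ℝ, 0 < Δt → IsFD q Δt w Mx u0 (U Δt))
    (v : ℤ → ℝ → ℝ) (hv : IsSD q w Mx u0 v) :
    ∀ i : ℤ, ∀ T : ℝ, 0 < T → ∀ ε : ℝ, 0 < ε →
      ∃ δ : ℝ, 0 < δ ∧
        ∀ Δt : ℝ, 0 < Δt → Δt < δ →
          ∀ t ∈ Set.Icc (0 : ℝ) T, |interp Δt u0 (U Δt) i t - v i t| ≤ ε := by
  intro i T _ ε hε
  obtain ⟨δ₁, hδ₁, hgrid⟩ :=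
    exists_abs_sub_le_of_isFD_of_isSD hq hw0 hwsym hwsum hU hv i (T + 1) (half_pos hε)
  obtain ⟨δ₂, hδ₂, hcont⟩ := Metric.uniformContinuousOn_iff.1
    ((isCompact_Icc (a := 0) (b := T + 1)).uniformContinuousOn_of_continuous
      ((hv.1 i).mono Set.Icc_subset_Ici_self)) (ε / 2) (half_pos hε)
  refine ⟨min (min δ₁ δ₂) 1, by positivity, fun Δt hΔt hδ t ht => ?_⟩
  simp only [lt_min_iff] at hδ
  obtain ⟨n, hinterp, htn, hnt⟩ := exists_interp_eq hΔt ht.1 (hU Δt hΔt).1 i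
  have hnT : n * Δt ≤ T + 1 := by linarith [ht.2]
  have htime := hcont (n * Δt) ⟨by positivity, hnT⟩ t ⟨ht.1, by linarith [ht.2]⟩
    (by rw [Real.dist_eq, abs_of_nonneg (by linarith)]; linarith)
  rw [Real.dist_eq] at htime
  rw [hinterp]
  linarith [abs_sub_le (U Δt n i) (v i (n * Δt)) (v i t), hgrid Δt hΔt hδ.1.1 n hnT]

theorem stmt19 (q h : ℝ) (hq : 1 < q) (hh : 0 < h)
    (Mx : ℤ) (hMx : 1 ≤ Mx)
    (w : ℤ → ℝ) (hw0 : ∀ j : ℤ, 0 ≤ w j) (hwsym : ∀ j : ℤ, w (-j) = w j) (hwsum : Summable w)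
    (u0 : ℤ → ℝ) (hu0 : ∀ i : ℤ, Mx < |i| → u0 i = 0)
    (U : ℝ → ℕ → ℤ → ℝ) (hU : ∀ Δt : ℝ, 0 < Δt → IsFD q Δt w Mx u0 (U Δt))
    (v : ℤ → ℝ → ℝ) (hv : IsSD q w Mx u0 v) :
    ∀ i : ℤ, ∀ T : ℝ, 0 < T → ∀ ε : ℝ, 0 < ε →
      ∃ δ : ℝ, 0 < δ ∧
        ∀ Δt : ℝ, 0 < Δt → Δt < δ →
          ∀ t ∈ Set.Icc (0 : ℝ) T, |interp Δt u0 (U Δt) i t - v i t| ≤ ε :=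
  stmt19_general q hq Mx w hw0 hwsym hwsum u0 U hU v hv
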